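/- arXiv:1910.02643 — 4 statements merged into one kernel-verified Lean document; each statement's English description precedes it below -/
import Mathlib

section
/- Sobolev inequality with shift (Lemma 3.6, Lipschitz form): Let N > 2, 1 ≤ p < N, p* = Np/(N−p), 0 < ν < 1 and 0 < r < R. Let Ω be a bounded open subset of ℝ^N with Ω ⊆ B_r(0), and suppose S > 0 is such that (∫_{ℝ^N} |w|^{p*} dx)^{1/p*} ≤ S (∫_{ℝ^N} |∇w|^p dx)^{1/p} for every Lipschitz w : ℝ^N → ℝ with compact support. Let v : ℝ^N → [0,∞) be Lipschitz with v = 0 on ℝ^N∖Ω, and for ε > 0 set φ_ε = (ε + v)^ν. Then for every ε > 0: (∫_Ω φ_ε^{p*} dx)^{1/p*} ≤ S (A(ε) + ∫_Ω |∇φ_ε|^p dx)^{1/p}, where A(ε) = ε^{pν} |B_R(0)∖B_r(0)| / (R−r)^p; in particular lim_{ε→0} A(ε) = 0. -/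
/-!
Test the Sobolev inequality with `w = η φ_ε`, where `η` is the radial cutoff equal to `1` on
`B_r`, to `0` off `B_R` and `(R - r)⁻¹`-Lipschitz in between. On `Ω` we have `w = φ_ε`; on
`B_r \ Ω` the function `φ_ε` is constant, so its gradient vanishes almost everywhere there
(almost every point of a set is a density point, where the tangent cone of the set is the whole
space and derivatives within the set are unique); on the annulus `∇w = ε ^ ν ∇η` has norm at
most `ε ^ ν / (R - r)`.
-/

open MeasureTheory Filter Metric Set Module
open scoped ENNReal NNReal Topology

section Density

variable {E : Type*} [NormedAddCommGroup E] [NormedSpace ℝ E] [FiniteDimensional ℝ E]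
  [MeasurableSpace E] [BorelSpace E] (μ : Measure E) [μ.IsAddHaarMeasure] {s : Set E} {x : E}

/- The ball `B(x + t • u, δ t)` fills the fixed proportion `(δ / (‖u‖ + δ)) ^ d` of
`B(x, (‖u‖ + δ) t)`, so it cannot miss `s` once `s` has density close enough to `1` there. -/
theorem eventually_inter_ball_nonempty_of_tendsto_density
    (hx : Tendsto (fun ρ => μ (s ∩ closedBall x ρ) / μ (closedBall x ρ)) (𝓝[>] 0) (𝓝 1))
    (u : E) {δ : ℝ} (hδ : 0 < δ) :
    ∀ᶠ t in 𝓝[>] 0, (s ∩ ball (x + t • u) (δ * t)).Nonempty := by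
  set a := ‖u‖ + δ
  have ha : 0 < a := by positivity
  set θ : ℝ≥0∞ := ENNReal.ofReal ((δ / a) ^ finrank ℝ E)
  have hθ : θ ≠ 0 := by positivity
  have hdense : ∀ᶠ t in 𝓝[>] 0,
      1 - θ < μ (s ∩ closedBall x (a * t)) / μ (closedBall x (a * t)) :=
    eventually_nhdsGT_zero_mul_left ha
      (hx.eventually_const_lt (ENNReal.sub_lt_self ENNReal.one_ne_top one_ne_zero hθ))
  filter_upwards [hdense, self_mem_nhdsWithin] with t ht (ht0 : 0 < t)
  by_contra hempty
  set B := closedBall x (a * t)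
  have hB0 : μ B ≠ 0 := (measure_closedBall_pos μ x (by positivity)).ne'
  have hBtop : μ B ≠ ∞ := measure_closedBall_lt_top.ne
  have hsub : ball (x + t • u) (δ * t) ⊆ B := by
    refine (ball_subset_closedBall).trans (closedBall_subset_closedBall' ?_)
    rw [dist_self_add_left, norm_smul, Real.norm_of_nonneg ht0.le]
    linarith
  have hsmall : μ (ball (x + t • u) (δ * t)) = θ * μ B := by
    rw [Measure.addHaar_ball_of_pos μ _ (by positivity), Measure.addHaar_closedBall μ _
      (by positivity), ← mul_assoc, ← ENNReal.ofReal_mul (by positivity), ← mul_pow]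
    congr 3
    field_simp
  have hle : μ (s ∩ B) ≤ (1 - θ) * μ B := calc
    μ (s ∩ B) ≤ μ (B \ ball (x + t • u) (δ * t)) := by
      refine measure_mono fun y hy => ⟨hy.2, fun hyb => hempty ⟨y, hy.1, hyb⟩⟩
    _ = (1 - θ) * μ B := by
      rw [measure_sdiff hsub measurableSet_ball.nullMeasurableSet
        (measure_ball_lt_top.ne), hsmall, ENNReal.sub_mul (fun _ _ => hBtop), one_mul]
  exact (ENNReal.lt_div_iff_mul_lt (Or.inl hB0) (Or.inl hBtop)).1 ht |>.not_ge hle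

theorem tangentConeAt_eq_univ_of_tendsto_density
    (hx : Tendsto (fun ρ => μ (s ∩ closedBall x ρ) / μ (closedBall x ρ)) (𝓝[>] 0) (𝓝 1)) :
    tangentConeAt ℝ s x = univ := by
  refine eq_univ_of_forall fun u => ?_
  rw [tangentConeAt_eq_biInter_closure, mem_iInter₂]
  intro U hU
  obtain ⟨ρ, hρ, hρU⟩ := Metric.mem_nhds_iff.1 hU
  rw [Metric.mem_closure_iff]
  intro δ hδ
  obtain ⟨t, ⟨y, hys, hyt⟩, ht0, htρ⟩ :=
    ((eventually_inter_ball_nonempty_of_tendsto_density μ hx u hδ).and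
      (Ioo_mem_nhdsGT (show 0 < ρ / (‖u‖ + δ) by positivity))).exists
  have hyx : ‖y - x‖ < ρ := calc
    ‖y - x‖ = ‖(y - (x + t • u)) + t • u‖ := by congr 1; abel
    _ ≤ δ * t + t * ‖u‖ := by
      grw [norm_add_le, ← dist_eq_norm, mem_ball.1 hyt, norm_smul, Real.norm_of_nonneg ht0.le]
    _ < ρ := by
      rw [lt_div_iff₀ (by positivity)] at htρ
      linarith
  refine ⟨t⁻¹ • (y - x), smul_mem_smul (mem_univ _) ⟨hρU (by simpa using hyx), by simpa⟩, ?_⟩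
  have : u - t⁻¹ • (y - x) = -(t⁻¹ • (y - (x + t • u))) := by
    simp only [smul_sub, smul_add, smul_smul, inv_mul_cancel₀ ht0.ne', one_smul]; abel
  rw [dist_eq_norm, this, norm_neg, norm_smul, Real.norm_of_nonneg (by positivity),
    ← dist_eq_norm, inv_mul_lt_iff₀ ht0]
  linarith [mem_ball.1 hyt]

theorem ae_uniqueDiffWithinAt (s : Set E) : ∀ᵐ x ∂μ.restrict s, UniqueDiffWithinAt ℝ s x := by
  filter_upwards [Besicovitch.ae_tendsto_measure_inter_div μ s] with x hx
  have hcone := tangentConeAt_eq_univ_of_tendsto_density μ hx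
  rw [uniqueDiffWithinAt_iff, hcone]
  exact ⟨by simp, mem_closure_of_nonempty_tangentConeAt (hcone ▸ univ_nonempty)⟩

theorem ae_fderiv_eq_zero_of_eqOn_const {F : Type*} [NormedAddCommGroup F] [NormedSpace ℝ F]
    {f : E → F} {c : F} (hs : MeasurableSet s) (hf : EqOn f (fun _ => c) s) :
    ∀ᵐ x ∂μ.restrict s, fderiv ℝ f x = 0 := by
  filter_upwards [ae_uniqueDiffWithinAt μ s, ae_restrict_mem hs] with x hux hxs
  by_cases hd : DifferentiableAt ℝ f x
  · exact hux.eq hd.hasFDerivAt.hasFDerivWithinAt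
      ((hasFDerivWithinAt_const c x s).congr hf (hf hxs))
  · exact fderiv_zero_of_not_differentiableAt hd

end Density

section Cutoff

variable {E : Type*} [NormedAddCommGroup E] {r R : ℝ} {x : E}

noncomputable def radialCutoff (r R : ℝ) (x : E) : ℝ := max 0 (min 1 ((R - ‖x‖) / (R - r)))

theorem radialCutoff_of_norm_le (hrR : r < R) (hx : ‖x‖ ≤ r) : radialCutoff r R x = 1 := by
  have : 1 ≤ (R - ‖x‖) / (R - r) := by rw [one_le_div (by linarith)]; linarith
  simp [radialCutoff, this]

theorem radialCutoff_of_le_norm (hrR : r < R) (hx : R ≤ ‖x‖) : radialCutoff r R x = 0 := by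
  have : (R - ‖x‖) / (R - r) ≤ 0 := div_nonpos_of_nonpos_of_nonneg (by linarith) (by linarith)
  simp [radialCutoff, this]

theorem lipschitzWith_radialCutoff [NormedSpace ℝ E] (hrR : r < R) :
    LipschitzWith (R - r)⁻¹.toNNReal (radialCutoff (E := E) r R) := by
  have haff : LipschitzWith (R - r)⁻¹.toNNReal fun t : ℝ => (R - t) / (R - r) := by
    refine LipschitzWith.of_dist_le_mul fun a b => ?_
    rw [Real.coe_toNNReal _ (inv_nonneg.2 (by linarith)), Real.dist_eq, Real.dist_eq,
      ← sub_div, div_eq_inv_mul, abs_mul, abs_of_pos (inv_pos.2 (by linarith : 0 < R - r)),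
      sub_sub_sub_cancel_left, abs_sub_comm]
  have h := ((haff.comp (lipschitzWith_one_norm (E := E))).const_min 1).const_max 0
  rw [mul_one] at h
  exact h

theorem norm_fderiv_radialCutoff_le [NormedSpace ℝ E] (hrR : r < R) (x : E) :
    ‖fderiv ℝ (radialCutoff r R) x‖ ≤ (R - r)⁻¹ := by
  simpa [Real.coe_toNNReal _ (inv_nonneg.2 (sub_nonneg.2 hrR.le))] using
    norm_fderiv_le_of_lipschitz ℝ (x₀ := x) (lipschitzWith_radialCutoff hrR)

theorem fderiv_radialCutoff_of_notMem [NormedSpace ℝ E] (hrR : r < R)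
    (hx : x ∉ closedBall 0 R \ ball 0 r) :
    fderiv ℝ (radialCutoff r R) x = 0 := by
  simp only [Set.mem_sdiff, mem_closedBall, mem_ball, dist_zero_right, not_and, not_lt] at hx
  rcases lt_or_ge ‖x‖ r with hxr | hxr
  · have : radialCutoff r R =ᶠ[𝓝 x] fun _ => 1 := by
      filter_upwards [isOpen_lt continuous_norm continuous_const |>.mem_nhds hxr] with y hy
      exact radialCutoff_of_norm_le hrR (le_of_lt hy)
    rw [this.fderiv_eq, fderiv_const_apply]
  · have : radialCutoff r R =ᶠ[𝓝 x] fun _ => 0 := by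
      filter_upwards [isOpen_lt continuous_const continuous_norm |>.mem_nhds
        (lt_of_not_ge fun h => hx h hxr)] with y hy
      exact radialCutoff_of_le_norm hrR (le_of_lt hy)
    rw [this.fderiv_eq, fderiv_const_apply]

end Cutoff

theorem lipschitzOnWith_rpow_Ici {ε ν : ℝ} (hε : 0 < ε) (hν0 : 0 ≤ ν) (hν1 : ν ≤ 1) :
    LipschitzOnWith (ν * ε ^ (ν - 1)).toNNReal (fun t : ℝ => t ^ ν) (Ici ε) := by
  refine (convex_Ici ε).lipschitzOnWith_of_nnnorm_hasDerivWithin_le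
    (fun t ht => (Real.hasDerivAt_rpow_const (Or.inl (hε.trans_le ht).ne')).hasDerivWithinAt)
    fun t (ht : ε ≤ t) => ?_
  rw [← NNReal.coe_le_coe, coe_nnnorm, Real.norm_eq_abs, Real.coe_toNNReal _ (by positivity),
    abs_of_nonneg (by have := hε.trans_le ht; positivity)]
  exact mul_le_mul_of_nonneg_left (Real.rpow_le_rpow_of_nonpos hε ht (by linarith)) hν0

theorem LipschitzWith.const_add_rpow {E : Type*} [PseudoMetricSpace E] {v : E → ℝ} {C : ℝ≥0}
    (hv : LipschitzWith C v) (hv0 : ∀ x, 0 ≤ v x) {ε ν : ℝ} (hε : 0 < ε) (hν0 : 0 ≤ ν)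
    (hν1 : ν ≤ 1) : LipschitzWith ((ν * ε ^ (ν - 1)).toNNReal * C) fun x => (ε + v x) ^ ν := by
  have hshift : LipschitzWith C fun x => ε + v x := by
    simpa using (LipschitzWith.const ε).add hv
  rw [← lipschitzOnWith_univ]
  exact (lipschitzOnWith_rpow_Ici hε hν0 hν1).comp (hshift.lipschitzOnWith)
    fun x _ => by simpa using hv0 x

section CutoffExtension

variable {E : Type*} [NormedAddCommGroup E] {f : E → ℝ} {c r R : ℝ} {Ω : Set E} {x : E}

/- When `f = c` off a subset of `B_r`, this is `radialCutoff r R * f`; written as a sum it is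
Lipschitz whenever `f` is, with no boundedness needed. -/
noncomputable def cutoffExtension (f : E → ℝ) (c r R : ℝ) (x : E) : ℝ :=
  f x - c + c * radialCutoff r R x

theorem cutoffExtension_eqOn_ball (hrR : r < R) : EqOn (cutoffExtension f c r R) f (ball 0 r) :=
  fun x hx => by
    rw [cutoffExtension, radialCutoff_of_norm_le hrR (mem_ball_zero_iff.1 hx).le]
    ring

theorem cutoffExtension_of_lt_norm (hΩr : Ω ⊆ ball 0 r) (hf : ∀ x ∉ Ω, f x = c)
    (hx : r < ‖x‖) : cutoffExtension f c r R x = c * radialCutoff r R x := by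
  have hxΩ : x ∉ Ω := fun h => (mem_ball_zero_iff.1 (hΩr h)).not_gt hx
  rw [cutoffExtension, hf x hxΩ, sub_self, zero_add]

theorem hasCompactSupport_cutoffExtension [ProperSpace E] (hrR : r < R) (hΩr : Ω ⊆ ball 0 r)
    (hf : ∀ x ∉ Ω, f x = c) : HasCompactSupport (cutoffExtension f c r R) := by
  refine HasCompactSupport.intro (isCompact_closedBall 0 R) fun x hx => ?_
  have hRx : R < ‖x‖ := by simpa using hx
  rw [cutoffExtension_of_lt_norm hΩr hf (hrR.trans hRx), radialCutoff_of_le_norm hrR hRx.le,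
    mul_zero]

theorem LipschitzWith.cutoffExtension [NormedSpace ℝ E] {K : ℝ≥0} (hf : LipschitzWith K f)
    (hrR : r < R) :
    LipschitzWith (K + ‖c‖₊ * (R - r)⁻¹.toNNReal) (cutoffExtension f c r R) := by
  have h := (hf.sub (LipschitzWith.const c)).add
    ((lipschitzWith_smul c).comp (lipschitzWith_radialCutoff (E := E) hrR))
  rw [add_zero] at h
  exact h

theorem ae_rpow_norm_fderiv_cutoffExtension_le [NormedSpace ℝ E] [FiniteDimensional ℝ E]
    [Nontrivial E] [MeasurableSpace E] [BorelSpace E] (μ : Measure E) [μ.IsAddHaarMeasure]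
    {p : ℝ} (hp : 0 < p) (hrR : r < R) (hΩo : IsOpen Ω) (hΩr : Ω ⊆ ball 0 r)
    (hf : ∀ x ∉ Ω, f x = c) :
    ∀ᵐ x ∂μ, ‖fderiv ℝ (cutoffExtension f c r R) x‖ ^ p ≤
      Ω.indicator (fun x => ‖fderiv ℝ f x‖ ^ p) x +
        (closedBall 0 R \ ball 0 r).indicator (fun _ => (|c| / (R - r)) ^ p) x := by
  have hfΩc : ∀ᵐ x ∂μ, x ∉ Ω → fderiv ℝ f x = 0 :=
    (ae_restrict_iff' hΩo.measurableSet.compl).1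
      (ae_fderiv_eq_zero_of_eqOn_const μ hΩo.measurableSet.compl hf)
  have hsphere : ∀ᵐ x ∂μ, ‖x‖ ≠ r :=
    measure_mono_null (fun x hx => by simpa using hx) (Measure.addHaar_sphere μ 0 r)
  filter_upwards [hfΩc, hsphere] with x hfx hxr
  have hΩ_nonneg : 0 ≤ Ω.indicator (fun x => ‖fderiv ℝ f x‖ ^ p) x :=
    indicator_nonneg (fun _ _ => by positivity) x
  have hA_nonneg : 0 ≤ (closedBall 0 R \ ball 0 r).indicator (fun _ => (|c| / (R - r)) ^ p) x :=
    indicator_nonneg (fun _ _ => by positivity) x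
  rcases lt_or_gt_of_ne hxr with hlt | hgt
  · have hball : ball (0 : E) r ∈ 𝓝 x := isOpen_ball.mem_nhds (mem_ball_zero_iff.2 hlt)
    rw [Filter.eventuallyEq_of_mem hball (cutoffExtension_eqOn_ball hrR) |>.fderiv_eq]
    by_cases hxΩ : x ∈ Ω
    · rw [indicator_of_mem hxΩ]
      linarith
    · rw [hfx hxΩ, norm_zero, Real.zero_rpow hp.ne']
      linarith
  · have hloc : cutoffExtension f c r R =ᶠ[𝓝 x] c • radialCutoff r R := by
      filter_upwards [isOpen_lt continuous_const continuous_norm |>.mem_nhds hgt] with y hy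
      exact cutoffExtension_of_lt_norm hΩr hf hy
    rw [hloc.fderiv_eq, fderiv_const_smul_field, Pi.smul_apply, norm_smul,
      Real.norm_eq_abs]
    by_cases hxA : x ∈ closedBall 0 R \ ball 0 r
    · rw [indicator_of_mem hxA, div_eq_mul_inv]
      grw [norm_fderiv_radialCutoff_le hrR x]
      linarith
    · rw [fderiv_radialCutoff_of_notMem hrR hxA, norm_zero, mul_zero, Real.zero_rpow hp.ne']
      linarith

theorem integral_rpow_norm_fderiv_cutoffExtension_le [NormedSpace ℝ E] [FiniteDimensional ℝ E]
    [Nontrivial E] [MeasurableSpace E] [BorelSpace E] (μ : Measure E) [μ.IsAddHaarMeasure]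
    {K : ℝ≥0} (hfL : LipschitzWith K f) {p : ℝ} (hp : 0 < p) (hrR : r < R) (hΩo : IsOpen Ω)
    (hΩr : Ω ⊆ ball 0 r) (hf : ∀ x ∉ Ω, f x = c) :
    ∫ x, ‖fderiv ℝ (cutoffExtension f c r R) x‖ ^ p ∂μ ≤
      ∫ x in Ω, ‖fderiv ℝ f x‖ ^ p ∂μ + (|c| / (R - r)) ^ p * μ.real (ball 0 R \ ball 0 r) := by
  set A : Set E := closedBall 0 R \ ball 0 r
  have hΩint : IntegrableOn (fun x => ‖fderiv ℝ f x‖ ^ p) Ω μ := by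
    refine Measure.integrableOn_of_bounded (M := (K : ℝ) ^ p)
      (measure_mono hΩr |>.trans_lt measure_ball_lt_top).ne
      ((measurable_fderiv ℝ f).norm.pow_const p).aestronglyMeasurable
      (ae_of_all _ fun x => ?_)
    rw [Real.norm_of_nonneg (by positivity)]
    gcongr
    exact norm_fderiv_le_of_lipschitz ℝ hfL
  have hAint : IntegrableOn (fun _ => (|c| / (R - r)) ^ p) A μ :=
    integrableOn_const (measure_mono sdiff_subset |>.trans_lt measure_closedBall_lt_top).ne
  have hA : μ.real A ≤ μ.real (ball 0 R \ ball 0 r) := by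
    refine ENNReal.toReal_mono (measure_mono sdiff_subset |>.trans_lt measure_ball_lt_top).ne ?_
    calc μ A ≤ μ ((ball 0 R \ ball 0 r) ∪ sphere 0 R) := measure_mono fun x hx => by
          rcases (mem_closedBall.1 hx.1).lt_or_eq with h | h
          · exact Or.inl ⟨h, hx.2⟩
          · exact Or.inr h
      _ ≤ μ (ball 0 R \ ball 0 r) := by
          grw [measure_union_le, Measure.addHaar_sphere, add_zero]
  calc ∫ x, ‖fderiv ℝ (cutoffExtension f c r R) x‖ ^ p ∂μ
      ≤ ∫ x, Ω.indicator (fun x => ‖fderiv ℝ f x‖ ^ p) x +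
          A.indicator (fun _ => (|c| / (R - r)) ^ p) x ∂μ :=
        integral_mono_of_nonneg (ae_of_all _ fun x => by positivity)
          ((hΩint.integrable_indicator hΩo.measurableSet).add
            (hAint.integrable_indicator (measurableSet_closedBall.diff measurableSet_ball)))
          (ae_rpow_norm_fderiv_cutoffExtension_le μ hp hrR hΩo hΩr hf)
    _ = ∫ x in Ω, ‖fderiv ℝ f x‖ ^ p ∂μ + (|c| / (R - r)) ^ p * μ.real A := by
        rw [integral_add (hΩint.integrable_indicator hΩo.measurableSet)
          (hAint.integrable_indicator (measurableSet_closedBall.diff measurableSet_ball)),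
          integral_indicator hΩo.measurableSet,
          integral_indicator (measurableSet_closedBall.diff measurableSet_ball),
          setIntegral_const, smul_eq_mul, mul_comm]
    _ ≤ _ := by gcongr

end CutoffExtension

theorem norm_gradient_eq_norm_fderiv {F : Type*} [NormedAddCommGroup F] [InnerProductSpace ℝ F]
    [CompleteSpace F] (f : F → ℝ) (x : F) : ‖gradient f x‖ = ‖fderiv ℝ f x‖ := by
  rw [← toDual_gradient, LinearIsometryEquiv.norm_map]

theorem sobolev_inequality_with_shift {E : Type*} [NormedAddCommGroup E] [InnerProductSpace ℝ E]
    [FiniteDimensional ℝ E] [Nontrivial E] [MeasurableSpace E] [BorelSpace E]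
    (μ : Measure E) [μ.IsAddHaarMeasure] {p q ν r R S ε : ℝ} (hp : 0 < p) (hq : 0 < q)
    (hν0 : 0 ≤ ν) (hν1 : ν ≤ 1) (hrR : r < R) (hS : 0 ≤ S) (hε : 0 < ε)
    {Ω : Set E} (hΩo : IsOpen Ω) (hΩr : Ω ⊆ ball 0 r)
    (hSob : ∀ w : E → ℝ, (∃ c, LipschitzWith c w) → HasCompactSupport w →
      (∫ x, |w x| ^ q ∂μ) ^ (1 / q) ≤ S * (∫ x, ‖gradient w x‖ ^ p ∂μ) ^ (1 / p))
    {v : E → ℝ} {C : ℝ≥0} (hv : LipschitzWith C v) (hv0 : ∀ x, 0 ≤ v x)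
    (hvΩ : ∀ x, x ∉ Ω → v x = 0) :
    (∫ x in Ω, ((ε + v x) ^ ν) ^ q ∂μ) ^ (1 / q) ≤
      S * (ε ^ (p * ν) * μ.real (ball 0 R \ ball 0 r) / (R - r) ^ p +
        ∫ x in Ω, ‖gradient (fun y => (ε + v y) ^ ν) x‖ ^ p ∂μ) ^ (1 / p) := by
  set φ : E → ℝ := fun y => (ε + v y) ^ ν
  set w := cutoffExtension φ (ε ^ ν) r R
  have hφ0 : ∀ x, 0 ≤ φ x := fun x => by have := hv0 x; positivity
  have hφL : LipschitzWith _ φ := hv.const_add_rpow hv0 hε hν0 hν1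
  have hφΩ : ∀ x ∉ Ω, φ x = ε ^ ν := fun x hx => by simp [φ, hvΩ x hx]
  have hLHS : ∫ x in Ω, φ x ^ q ∂μ ≤ ∫ x, |w x| ^ q ∂μ := calc
    ∫ x in Ω, φ x ^ q ∂μ = ∫ x in Ω, |w x| ^ q ∂μ :=
      setIntegral_congr_fun hΩo.measurableSet fun x hx => by
        rw [show w x = φ x from cutoffExtension_eqOn_ball hrR (hΩr hx), abs_of_nonneg (hφ0 x)]
    _ ≤ ∫ x, |w x| ^ q ∂μ := by
      have hcont : Continuous fun x => |w x| ^ q :=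
        (hφL.cutoffExtension hrR).continuous.abs.rpow_const fun _ => Or.inr hq.le
      have hsupp : HasCompactSupport fun x => |w x| ^ q :=
        (hasCompactSupport_cutoffExtension hrR hΩr hφΩ).comp_left
          (g := fun t => |t| ^ q) (by simp [Real.zero_rpow hq.ne'])
      exact setIntegral_le_integral (hcont.integrable_of_hasCompactSupport hsupp)
        (ae_of_all _ fun x => by positivity)
  have hRHS : ∫ x, ‖gradient w x‖ ^ p ∂μ ≤ ε ^ (p * ν) * μ.real (ball 0 R \ ball 0 r) /
      (R - r) ^ p + ∫ x in Ω, ‖gradient φ x‖ ^ p ∂μ := by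
    have hconst : (|ε ^ ν| / (R - r)) ^ p = ε ^ (p * ν) / (R - r) ^ p := by
      rw [abs_of_nonneg (by positivity), Real.div_rpow (by positivity) (by linarith),
        ← Real.rpow_mul hε.le, mul_comm]
    simp only [norm_gradient_eq_norm_fderiv]
    have := integral_rpow_norm_fderiv_cutoffExtension_le μ hφL hp hrR hΩo hΩr hφΩ
    rw [hconst, div_mul_eq_mul_div] at this
    linarith
  calc (∫ x in Ω, φ x ^ q ∂μ) ^ (1 / q)
      ≤ (∫ x, |w x| ^ q ∂μ) ^ (1 / q) := by
        gcongr
        exact setIntegral_nonneg hΩo.measurableSet fun x _ => by have := hφ0 x; positivity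
    _ ≤ S * (∫ x, ‖gradient w x‖ ^ p ∂μ) ^ (1 / p) :=
        hSob w ⟨_, hφL.cutoffExtension hrR⟩ (hasCompactSupport_cutoffExtension hrR hΩr hφΩ)
    _ ≤ _ := by gcongr

theorem stmt_7_general
    (N : ℕ) (p pstar ν r R S : ℝ)
    (hN : 2 < N) (hp1 : 1 ≤ p) (hp2 : p < N)
    (hpstar : pstar = (N : ℝ) * p / ((N : ℝ) - p))
    (hν1 : 0 < ν) (hν2 : ν < 1) (hrR : r < R) (hS : 0 < S)
    (Ω : Set (EuclideanSpace ℝ (Fin N))) (hΩo : IsOpen Ω)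
    (hΩr : Ω ⊆ Metric.ball (0 : EuclideanSpace ℝ (Fin N)) r)
    -- the Sobolev inequality with constant S
    (hSob : ∀ w : EuclideanSpace ℝ (Fin N) → ℝ, (∃ c, LipschitzWith c w) →
        HasCompactSupport w →
        (∫ x, |w x| ^ pstar) ^ (1 / pstar) ≤ S * (∫ x, ‖gradient w x‖ ^ p) ^ (1 / p))
    (v : EuclideanSpace ℝ (Fin N) → ℝ) (hv : ∃ c, LipschitzWith c v)
    (hv0 : ∀ x, 0 ≤ v x) (hvΩ : ∀ x, x ∉ Ω → v x = 0) :
    (∀ ε : ℝ, 0 < ε →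
      (∫ x in Ω, ((ε + v x) ^ ν) ^ pstar) ^ (1 / pstar) ≤
        S * ((ε ^ (p * ν) *
                (volume (Metric.ball (0 : EuclideanSpace ℝ (Fin N)) R \
                  Metric.ball (0 : EuclideanSpace ℝ (Fin N)) r)).toReal / (R - r) ^ p)
              + ∫ x in Ω, ‖gradient (fun y => (ε + v y) ^ ν) x‖ ^ p) ^ (1 / p)) ∧
    Tendsto
      (fun ε : ℝ => ε ^ (p * ν) *
          (volume (Metric.ball (0 : EuclideanSpace ℝ (Fin N)) R \
            Metric.ball (0 : EuclideanSpace ℝ (Fin N)) r)).toReal / (R - r) ^ p)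
      (𝓝[>] 0) (𝓝 0) := by
  have hp : 0 < p := by linarith
  have hpstar_pos : 0 < pstar := by
    rw [hpstar]
    exact div_pos (by positivity) (by linarith)
  refine ⟨fun ε hε => ?_, ?_⟩
  · have : Nonempty (Fin N) := ⟨⟨0, by omega⟩⟩
    obtain ⟨C, hC⟩ := hv
    exact sobolev_inequality_with_shift volume hp hpstar_pos hν1.le hν2.le hrR hS.le hε hΩo hΩr
      hSob hC hv0 hvΩ
  · have hpν : 0 < p * ν := mul_pos hp hν1
    have h : Tendsto (fun ε : ℝ => ε ^ (p * ν)) (𝓝[>] 0) (𝓝 0) := by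
      simpa [Real.zero_rpow hpν.ne'] using
        (Real.continuousAt_rpow_const 0 _ (Or.inr hpν.le)).tendsto.mono_left nhdsWithin_le_nhds
    simpa using (h.mul_const _).div_const _

/-- Sobolev inequality with shift (Lemma 3.6, Lipschitz form). -/
theorem stmt_7
    (N : ℕ) (p pstar ν r R S : ℝ)
    (hN : 2 < N) (hp1 : 1 ≤ p) (hp2 : p < N)
    (hpstar : pstar = (N : ℝ) * p / ((N : ℝ) - p))
    (hν1 : 0 < ν) (hν2 : ν < 1) (hr : 0 < r) (hrR : r < R) (hS : 0 < S)
    (Ω : Set (EuclideanSpace ℝ (Fin N))) (hΩo : IsOpen Ω)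
    (hΩb : Bornology.IsBounded Ω)
    (hΩr : Ω ⊆ Metric.ball (0 : EuclideanSpace ℝ (Fin N)) r)
    -- the Sobolev inequality with constant S
    (hSob : ∀ w : EuclideanSpace ℝ (Fin N) → ℝ, (∃ c, LipschitzWith c w) →
        HasCompactSupport w →
        (∫ x, |w x| ^ pstar) ^ (1 / pstar) ≤ S * (∫ x, ‖gradient w x‖ ^ p) ^ (1 / p))
    (v : EuclideanSpace ℝ (Fin N) → ℝ) (hv : ∃ c, LipschitzWith c v)
    (hv0 : ∀ x, 0 ≤ v x) (hvΩ : ∀ x, x ∉ Ω → v x = 0) :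
    (∀ ε : ℝ, 0 < ε →
      (∫ x in Ω, ((ε + v x) ^ ν) ^ pstar) ^ (1 / pstar) ≤
        S * ((ε ^ (p * ν) *
                (volume (Metric.ball (0 : EuclideanSpace ℝ (Fin N)) R \
                  Metric.ball (0 : EuclideanSpace ℝ (Fin N)) r)).toReal / (R - r) ^ p)
              + ∫ x in Ω, ‖gradient (fun y => (ε + v y) ^ ν) x‖ ^ p) ^ (1 / p)) ∧
    Tendsto
      (fun ε : ℝ => ε ^ (p * ν) *
          (volume (Metric.ball (0 : EuclideanSpace ℝ (Fin N)) R \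
            Metric.ball (0 : EuclideanSpace ℝ (Fin N)) r)).toReal / (R - r) ^ p)
      (𝓝[>] 0) (𝓝 0) :=
  stmt_7_general N p pstar ν r R S hN hp1 hp2 hpstar hν1 hν2 hrR hS Ω hΩo hΩr hSob v hv hv0 hvΩ
end

section
/- Marcinkiewicz estimate for the function (Lemma 3.12, part (i), Lipschitz form): Let N > 2, 1 < p < N, p* = Np/(N−p), 0 < r < p, and let Ω ⊂ ℝ^N be a bounded open set. Suppose S > 0 is such that (∫_{ℝ^N} |w|^{p*} dx)^{1/p*} ≤ S (∫_{ℝ^N} |∇w|^p dx)^{1/p} for every Lipschitz w : ℝ^N → ℝ with compact support. Let u : ℝ^N → ℝ be Lipschitz with u = 0 on ℝ^N∖Ω, and assume there is M > 0 with ∫_{{|u|<ℓ}} |∇u|^p dx ≤ ℓ^r M for every ℓ > 0. Then for every ℓ > 0: |{x ∈ Ω : |u(x)| > ℓ}| ≤ S^{p*} M^{N/(N−p)} ℓ^{−N(p−r)/(N−p)}. -/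
open MeasureTheory
open scoped ENNReal

/-!
Apply the Sobolev inequality to the truncation `w = T_ℓ(u)`. On `{|u| > ℓ}` we have `|w| = ℓ`,
so `ℓ ^ p* |{|u| > ℓ}| ≤ ∫ |w| ^ p*`. On the other side `∇w = ∇u` on the open set `{|u| < ℓ}`,
`∇w = 0` where `|u| ≥ ℓ` (there `w` attains its extremum `±ℓ`), and `∇u = 0` almost everywhere
outside `Ω`: at a Lebesgue density point of `Ωᶜ` the tangent cone of `Ωᶜ` is the whole space,
so the derivative of a function vanishing on `Ωᶜ` is zero there. Hence `∫ |∇w| ^ p ≤ ℓ ^ r M`,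
and solving the Sobolev inequality for the measure gives the bound.
-/

open Filter Set Metric
open scoped Topology Pointwise

section Density

variable {E : Type*} [NormedAddCommGroup E] [NormedSpace ℝ E] [FiniteDimensional ℝ E]
  [MeasurableSpace E] [BorelSpace E] (μ : Measure E) [μ.IsAddHaarMeasure]

theorem tangentConeAt_eq_univ_of_tendsto_density_one {s : Set E} {x : E}
    (h : Tendsto (fun r => μ (s ∩ closedBall x r) / μ (closedBall x r)) (𝓝[>] 0) (𝓝 1)) :
    tangentConeAt ℝ s x = univ := by
  refine eq_univ_of_forall fun z => ?_
  simp only [tangentConeAt_eq_biInter_closure, mem_iInter₂, Metric.mem_closure_iff]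
  intro U hU ε hε
  obtain ⟨δ, hδ, hδU⟩ := Metric.mem_nhds_iff.1 hU
  have hsmall : ∀ᶠ r in 𝓝[>] (0 : ℝ), r ∈ Ioo 0 (δ / (‖z‖ + ε)) :=
    Ioo_mem_nhdsGT (by positivity)
  obtain ⟨r, ⟨y, hys, hy⟩, hr₀, hrδ⟩ :=
    ((Measure.eventually_nonempty_inter_smul_of_density_one μ s x h (ball z ε) measurableSet_ball
      (measure_ball_pos μ z hε).ne').and hsmall).exists
  obtain ⟨_, ⟨d, hd, rfl⟩, rfl⟩ := by simpa only [singleton_add, mem_image] using hy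
  have hdz : ‖d‖ < ‖z‖ + ε := by
    have := norm_le_norm_add_norm_sub' d z
    rw [mem_ball, dist_eq_norm] at hd
    linarith
  refine ⟨r⁻¹ • (r • d), smul_mem_smul (mem_univ _) ⟨hδU ?_, by simpa using hys⟩, ?_⟩
  · rw [mem_ball_zero_iff, norm_smul, Real.norm_of_nonneg hr₀.le]
    calc r * ‖d‖ ≤ r * (‖z‖ + ε) := by gcongr
      _ < δ := (lt_div_iff₀ (by positivity)).1 hrδ
  · rwa [inv_smul_smul₀ hr₀.ne', dist_comm, ← mem_ball]

theorem uniqueDiffWithinAt_of_tendsto_density_one {s : Set E} {x : E}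
    (h : Tendsto (fun r => μ (s ∩ closedBall x r) / μ (closedBall x r)) (𝓝[>] 0) (𝓝 1)) :
    UniqueDiffWithinAt ℝ s x := by
  have hcone := tangentConeAt_eq_univ_of_tendsto_density_one μ h
  exact ⟨by simp only [hcone, Submodule.span_univ, Submodule.top_coe, dense_univ],
    mem_closure_of_nonempty_tangentConeAt (hcone ▸ univ_nonempty)⟩

theorem ae_restrict_fderiv_eq_zero_of_eqOn_const {F : Type*} [NormedAddCommGroup F]
    [NormedSpace ℝ F] {f : E → F} {s : Set E} (hs : MeasurableSet s) {c : F}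
    (hf : ∀ x ∈ s, f x = c) : ∀ᵐ x ∂μ.restrict s, fderiv ℝ f x = 0 := by
  filter_upwards [Besicovitch.ae_tendsto_measure_inter_div μ s, ae_restrict_mem hs]
    with x hx hxs
  by_cases hdiff : DifferentiableAt ℝ f x
  · exact (uniqueDiffWithinAt_of_tendsto_density_one μ hx).eq
      hdiff.hasFDerivAt.hasFDerivWithinAt
      ((hasFDerivWithinAt_const c x s).congr hf (hf x hxs))
  · exact fderiv_zero_of_not_differentiableAt hdiff

end Density

def truncation (ℓ y : ℝ) : ℝ := max (-ℓ) (min ℓ y)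

namespace truncation

variable {ℓ y : ℝ}

theorem lipschitzWith (ℓ : ℝ) : LipschitzWith 1 (truncation ℓ) :=
  (LipschitzWith.id.const_min ℓ).const_max (-ℓ)

theorem neg_le (ℓ y : ℝ) : -ℓ ≤ truncation ℓ y := le_max_left _ _

theorem le_max_neg (ℓ y : ℝ) : truncation ℓ y ≤ max (-ℓ) ℓ :=
  max_le_max le_rfl (min_le_left _ _)

theorem eq_self_of_abs_lt (h : |y| < ℓ) : truncation ℓ y = y := by
  rw [truncation, min_eq_right (abs_lt.1 h).2.le, max_eq_right (abs_lt.1 h).1.le]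

theorem eq_max_neg_of_le (h : ℓ ≤ y) : truncation ℓ y = max (-ℓ) ℓ := by
  rw [truncation, min_eq_left h]

theorem eq_neg_of_le_neg (h : y ≤ -ℓ) : truncation ℓ y = -ℓ :=
  max_eq_left ((min_le_right _ _).trans h)

theorem zero (hℓ : 0 ≤ ℓ) : truncation ℓ 0 = 0 := by
  simp [truncation, hℓ]

theorem abs_eq_of_le_abs (hℓ : 0 ≤ ℓ) (h : ℓ ≤ |y|) : |truncation ℓ y| = ℓ := by
  rcases le_abs'.1 h with h | h
  · rw [eq_neg_of_le_neg h, abs_neg, abs_of_nonneg hℓ]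
  · rw [eq_max_neg_of_le h, max_eq_right (by linarith), abs_of_nonneg hℓ]

theorem _root_.HasCompactSupport.truncation_comp {X : Type*} [TopologicalSpace X] {u : X → ℝ}
    (hu : HasCompactSupport u) (hℓ : 0 ≤ ℓ) : HasCompactSupport (truncation ℓ ∘ u) :=
  hu.comp_left (zero hℓ)

theorem rpow_mul_measureReal_le_integral_abs_comp_rpow {α : Type*} [MeasurableSpace α]
    (μ : Measure α) {u : α → ℝ} {s : Set α} (hs : MeasurableSet s) (hμs : μ s ≠ ∞)
    (hℓ : 0 ≤ ℓ) (hus : ∀ x ∈ s, ℓ ≤ |u x|) {q : ℝ}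
    (hint : Integrable (fun x => |truncation ℓ (u x)| ^ q) μ) :
    ℓ ^ q * μ.real s ≤ ∫ x, |truncation ℓ (u x)| ^ q ∂μ :=
  calc ℓ ^ q * μ.real s ≤ ∫ x in s, |truncation ℓ (u x)| ^ q ∂μ :=
        setIntegral_ge_of_const_le_real hs hμs
          (fun x hx => (abs_eq_of_le_abs hℓ (hus x hx)).symm ▸ le_rfl) hint.integrableOn
    _ ≤ ∫ x, |truncation ℓ (u x)| ^ q ∂μ :=
        setIntegral_le_integral hint (ae_of_all _ fun _ => by positivity)

end truncation

section Gradient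

variable {F : Type*} [NormedAddCommGroup F] [InnerProductSpace ℝ F] [CompleteSpace F]
  {u : F → ℝ} {ℓ : ℝ} {x : F}

theorem gradient_truncation_comp_of_abs_lt (hu : ContinuousAt u x) (h : |u x| < ℓ) :
    gradient (truncation ℓ ∘ u) x = gradient u x :=
  Filter.EventuallyEq.gradient_eq <| (hu.abs.eventually (gt_mem_nhds h)).mono
    fun _ hy => truncation.eq_self_of_abs_lt hy

theorem gradient_truncation_comp_of_le_abs (h : ℓ ≤ |u x|) :
    gradient (truncation ℓ ∘ u) x = 0 := by
  suffices fderiv ℝ (truncation ℓ ∘ u) x = 0 by simp [gradient, this]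
  rcases le_abs'.1 h with h | h
  · refine IsLocalMin.fderiv_eq_zero (Eventually.of_forall fun y => ?_)
    simpa [truncation.eq_neg_of_le_neg h] using truncation.neg_le ℓ (u y)
  · refine IsLocalMax.fderiv_eq_zero (Eventually.of_forall fun y => ?_)
    simpa [truncation.eq_max_neg_of_le h] using truncation.le_max_neg ℓ (u y)

theorem norm_gradient_le_of_lipschitzWith {K : NNReal} (hu : LipschitzWith K u) (x : F) :
    ‖gradient u x‖ ≤ K := by
  rw [gradient, LinearIsometryEquiv.norm_map]
  exact norm_fderiv_le_of_lipschitz ℝ hu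

variable [MeasurableSpace F] [BorelSpace F]

theorem measurable_gradient (u : F → ℝ) : Measurable (gradient u) :=
  (InnerProductSpace.toDual ℝ F).symm.continuous.measurable.comp (measurable_fderiv ℝ u)

end Gradient

section Energy

variable {F : Type*} [NormedAddCommGroup F] [InnerProductSpace ℝ F] [FiniteDimensional ℝ F]
  [MeasurableSpace F] [BorelSpace F] (μ : Measure F) [μ.IsAddHaarMeasure]

theorem integral_norm_gradient_truncation_comp_rpow_le {u : F → ℝ} {K : NNReal}
    (hu : LipschitzWith K u) {Ω : Set F} (hΩ : MeasurableSet Ω) (hΩμ : μ Ω ≠ ∞)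
    (huΩ : ∀ x ∉ Ω, u x = 0) {p : ℝ} (hp : 0 < p) (ℓ : ℝ) :
    ∫ x, ‖gradient (truncation ℓ ∘ u) x‖ ^ p ∂μ ≤
      ∫ x in {x | x ∈ Ω ∧ |u x| < ℓ}, ‖gradient u x‖ ^ p ∂μ := by
  set E := {x | x ∈ Ω ∧ |u x| < ℓ}
  have hE : MeasurableSet E :=
    hΩ.inter (measurableSet_lt hu.continuous.measurable.abs measurable_const)
  have hint : IntegrableOn (fun x => ‖gradient u x‖ ^ p) E μ :=
    Measure.integrableOn_of_bounded (M := K ^ p)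
      (measure_ne_top_of_subset (fun _ hx => hx.1) hΩμ)
      ((measurable_gradient u).norm.pow_const p).aestronglyMeasurable
      (Eventually.of_forall fun x => by
        rw [Real.norm_of_nonneg (by positivity)]
        exact Real.rpow_le_rpow (norm_nonneg _) (norm_gradient_le_of_lipschitzWith hu x) hp.le)
  have hout : ∀ᵐ x ∂μ, x ∉ Ω → gradient u x = 0 := by
    refine ae_imp_of_ae_restrict ((ae_restrict_fderiv_eq_zero_of_eqOn_const μ hΩ.compl huΩ).mono
      fun x hx => ?_)
    simp [gradient, hx]
  rw [← integral_indicator hE]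
  refine integral_mono_of_nonneg (ae_of_all _ fun x => by positivity)
    ((integrable_indicator_iff hE).2 hint) ?_
  filter_upwards [hout] with x hx
  by_cases hxE : x ∈ E
  · rw [indicator_of_mem hxE, gradient_truncation_comp_of_abs_lt hu.continuous.continuousAt hxE.2]
  rw [indicator_of_notMem hxE]
  suffices gradient (truncation ℓ ∘ u) x = 0 by simp [this, hp.ne']
  by_cases hxΩ : x ∈ Ω
  · exact gradient_truncation_comp_of_le_abs (not_lt.1 fun h => hxE ⟨hxΩ, h⟩)
  by_cases h : |u x| < ℓ
  · rw [gradient_truncation_comp_of_abs_lt hu.continuous.continuousAt h, hx hxΩ]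
  · exact gradient_truncation_comp_of_le_abs (not_lt.1 h)

end Energy

theorem le_of_rpow_one_div_le_mul_rpow {V ℓ S M p q r : ℝ} (hV : 0 ≤ V) (hℓ : 0 < ℓ) (hS : 0 ≤ S)
    (hM : 0 ≤ M) (hq : 0 < q) (h : (ℓ ^ q * V) ^ (1 / q) ≤ S * (ℓ ^ r * M) ^ (1 / p)) :
    V ≤ S ^ q * M ^ (q / p) * ℓ ^ ((r / p - 1) * q) := by
  have hroot : V ^ (1 / q) ≤ S * M ^ (1 / p) * ℓ ^ (r / p - 1) := by
    rw [Real.mul_rpow (by positivity) hV, ← Real.rpow_mul hℓ.le, mul_one_div_cancel hq.ne',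
      Real.rpow_one] at h
    rw [Real.mul_rpow (by positivity) hM, ← Real.rpow_mul hℓ.le, mul_one_div] at h
    rw [Real.rpow_sub hℓ, Real.rpow_one, mul_div_assoc', le_div_iff₀ hℓ]
    linarith
  calc V = (V ^ (1 / q)) ^ q := by
        rw [← Real.rpow_mul hV, one_div_mul_cancel hq.ne', Real.rpow_one]
    _ ≤ (S * M ^ (1 / p) * ℓ ^ (r / p - 1)) ^ q := by gcongr
    _ = S ^ q * M ^ (q / p) * ℓ ^ ((r / p - 1) * q) := by
      rw [Real.mul_rpow (by positivity) (by positivity), Real.mul_rpow hS (by positivity),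
        ← Real.rpow_mul hM, ← Real.rpow_mul hℓ.le, one_div_mul_eq_div]

theorem stmt_8_general
    (N : ℕ) (p pstar r S M : ℝ)
    (hp1 : 1 < p) (hp2 : p < N)
    (hpstar : pstar = (N : ℝ) * p / ((N : ℝ) - p))
    (hS : 0 < S) (hM : 0 < M)
    (Ω : Set (EuclideanSpace ℝ (Fin N))) (hΩo : IsOpen Ω)
    (hΩb : Bornology.IsBounded Ω)
    (hSob : ∀ w : EuclideanSpace ℝ (Fin N) → ℝ, (∃ c, LipschitzWith c w) →
        HasCompactSupport w →
        (∫ x, |w x| ^ pstar) ^ (1 / pstar) ≤ S * (∫ x, ‖gradient w x‖ ^ p) ^ (1 / p))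
    (u : EuclideanSpace ℝ (Fin N) → ℝ) (hu : ∃ c, LipschitzWith c u)
    (huΩ : ∀ x, x ∉ Ω → u x = 0)
    (hen : ∀ ℓ : ℝ, 0 < ℓ →
        ∫ x in {x | x ∈ Ω ∧ |u x| < ℓ}, ‖gradient u x‖ ^ p ≤ ℓ ^ r * M) :
    ∀ ℓ : ℝ, 0 < ℓ →
      volume {x | x ∈ Ω ∧ ℓ < |u x|} ≤
        ENNReal.ofReal (S ^ pstar * M ^ ((N : ℝ) / ((N : ℝ) - p)) *
          ℓ ^ (-(N : ℝ) * (p - r) / ((N : ℝ) - p))) := by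
  intro ℓ hℓ
  obtain ⟨K, hK⟩ := hu
  have hp : 0 < p := by linarith
  have hNp : 0 < (N : ℝ) - p := by linarith
  have hq : 0 < pstar := by rw [hpstar]; exact div_pos (mul_pos (by linarith) hp) hNp
  set w := truncation ℓ ∘ u
  set A := {x | x ∈ Ω ∧ ℓ < |u x|}
  have hw : LipschitzWith (1 * K) w := (truncation.lipschitzWith ℓ).comp hK
  have hw_supp : HasCompactSupport w := HasCompactSupport.truncation_comp
    (.intro hΩb.isCompact_closure fun x hx => huΩ x fun h => hx (subset_closure h)) hℓ.le
  have hΩμ : volume Ω ≠ ∞ := hΩb.measure_lt_top.ne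
  have hAμ : volume A ≠ ∞ := measure_ne_top_of_subset (fun _ hx => hx.1) hΩμ
  have hlevel : ℓ ^ pstar * volume.real A ≤ ∫ x, |w x| ^ pstar :=
    truncation.rpow_mul_measureReal_le_integral_abs_comp_rpow volume
      (hΩo.inter (isOpen_lt continuous_const hK.continuous.abs)).measurableSet hAμ hℓ.le
      (fun x hx => hx.2.le)
      ((hw.continuous.abs.rpow_const fun _ => Or.inr hq.le).integrable_of_hasCompactSupport
        (hw_supp.comp_left (g := fun y => |y| ^ pstar) (by simp [hq.ne'])))
  have henergy : ∫ x, ‖gradient w x‖ ^ p ≤ ℓ ^ r * M :=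
    (integral_norm_gradient_truncation_comp_rpow_le volume hK hΩo.measurableSet hΩμ huΩ hp ℓ).trans
      (hen ℓ hℓ)
  have hsob : (ℓ ^ pstar * volume.real A) ^ (1 / pstar) ≤ S * (ℓ ^ r * M) ^ (1 / p) :=
    calc (ℓ ^ pstar * volume.real A) ^ (1 / pstar) ≤ (∫ x, |w x| ^ pstar) ^ (1 / pstar) := by
          gcongr
      _ ≤ S * (∫ x, ‖gradient w x‖ ^ p) ^ (1 / p) := hSob w ⟨_, hw⟩ hw_supp
      _ ≤ S * (ℓ ^ r * M) ^ (1 / p) := by gcongr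
  have hM_exp : pstar / p = N / (N - p) := by rw [hpstar]; field_simp
  have hℓ_exp : (r / p - 1) * pstar = -N * (p - r) / (N - p) := by rw [hpstar]; field_simp; ring
  rw [ENNReal.le_ofReal_iff_toReal_le hAμ (by positivity), ← hM_exp, ← hℓ_exp]
  exact le_of_rpow_one_div_le_mul_rpow measureReal_nonneg hℓ hS.le hM.le hq hsob

/-- Marcinkiewicz estimate for the function (Lemma 3.12, part (i), Lipschitz form). -/
theorem stmt_8
    (N : ℕ) (p pstar r S M : ℝ)
    (hN : 2 < N) (hp1 : 1 < p) (hp2 : p < N)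
    (hpstar : pstar = (N : ℝ) * p / ((N : ℝ) - p))
    (hr1 : 0 < r) (hr2 : r < p) (hS : 0 < S) (hM : 0 < M)
    (Ω : Set (EuclideanSpace ℝ (Fin N))) (hΩo : IsOpen Ω)
    (hΩb : Bornology.IsBounded Ω)
    (hSob : ∀ w : EuclideanSpace ℝ (Fin N) → ℝ, (∃ c, LipschitzWith c w) →
        HasCompactSupport w →
        (∫ x, |w x| ^ pstar) ^ (1 / pstar) ≤ S * (∫ x, ‖gradient w x‖ ^ p) ^ (1 / p))
    (u : EuclideanSpace ℝ (Fin N) → ℝ) (hu : ∃ c, LipschitzWith c u)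
    (huΩ : ∀ x, x ∉ Ω → u x = 0)
    (hen : ∀ ℓ : ℝ, 0 < ℓ →
        ∫ x in {x | x ∈ Ω ∧ |u x| < ℓ}, ‖gradient u x‖ ^ p ≤ ℓ ^ r * M) :
    ∀ ℓ : ℝ, 0 < ℓ →
      volume {x | x ∈ Ω ∧ ℓ < |u x|} ≤
        ENNReal.ofReal (S ^ pstar * M ^ ((N : ℝ) / ((N : ℝ) - p)) *
          ℓ ^ (-(N : ℝ) * (p - r) / ((N : ℝ) - p))) :=
  stmt_8_general N p pstar r S M hp1 hp2 hpstar hS hM Ω hΩo hΩb hSob u hu huΩ hen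
end

section
/- Interpolation estimate for fractional powers (gradient estimate of Subsection 2.6): Let N > 2, 1 < σ < 2, b = Nσ/(N−2+σ), 2* = 2N/(N−2), and suppose S > 0 is such that (∫_{ℝ^N} |w|^{2*} dx)^{1/2*} ≤ S (∫_{ℝ^N} |∇w|² dx)^{1/2} for every Lipschitz w : ℝ^N → ℝ with compact support. Then for every nonnegative Lipschitz v : ℝ^N → [0,∞) with compact support: ∫_{ℝ^N} |∇(v^{2/σ})|^b dx ≤ (2/σ)^b S^{2*(2−b)/2} (∫_{ℝ^N} |∇v|² dx)^{b/σ}. -/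
/-!
With `p = 2 / σ`, the chain rule gives `|∇(v ^ p)| ^ b = p ^ b * v ^ ((p - 1) b) * |∇v| ^ b`
almost everywhere. Hölder's inequality with exponents `2 / (2 - b)` and `2 / b` bounds the
integral of the right-hand side by `(∫ v ^ 2*) ^ ((2 - b) / 2) * (∫ |∇v| ^ 2) ^ (b / 2)`: the
choice of `b` is exactly what makes `(p - 1) b * 2 / (2 - b) = 2*`. The Sobolev inequality turns
the first factor into `S ^ (2* (2 - b) / 2) * (∫ |∇v| ^ 2) ^ (2* (2 - b) / 4)`, and the two
powers of `∫ |∇v| ^ 2` add up to `b / σ`.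
-/

open MeasureTheory InnerProductSpace

section Gradient

variable {E : Type*} [NormedAddCommGroup E] [InnerProductSpace ℝ E] [CompleteSpace E]

theorem norm_gradient_le_of_lipschitz {f : E → ℝ} {C : NNReal} (hf : LipschitzWith C f)
    (x : E) : ‖gradient f x‖ ≤ C := by
  rw [gradient, LinearIsometryEquiv.norm_map]
  exact norm_fderiv_le_of_lipschitz ℝ hf

theorem HasCompactSupport.gradient {f : E → ℝ} (hf : HasCompactSupport f) :
    HasCompactSupport (gradient f) :=
  hf.fderiv (𝕜 := ℝ) |>.comp_left (g := (toDual ℝ E).symm) (map_zero _)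

theorem measurable_gradient_s15 [MeasurableSpace E] [BorelSpace E] (f : E → ℝ) :
    Measurable (gradient f) :=
  (toDual ℝ E).symm.continuous.measurable.comp (measurable_fderiv ℝ f)

end Gradient

section Lipschitz

variable {E : Type*} [NormedAddCommGroup E] [InnerProductSpace ℝ E] [FiniteDimensional ℝ E]
  [MeasurableSpace E] [BorelSpace E] {μ : Measure E} [μ.IsAddHaarMeasure]
  {v : E → ℝ} {C : NNReal}

theorem LipschitzWith.ae_norm_gradient_rpow_eq (hv : LipschitzWith C v) (hv0 : ∀ x, 0 ≤ v x)
    {p : ℝ} (hp : 1 ≤ p) :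
    ∀ᵐ x ∂μ,
      ‖gradient (fun y => v y ^ p) x‖ = p * v x ^ (p - 1) * ‖gradient v x‖ := by
  filter_upwards [hv.ae_differentiableAt (μ := μ)] with x hx
  have hcomp : HasFDerivAt (fun y => v y ^ p) ((p * v x ^ (p - 1)) • fderiv ℝ v x) x :=
    (Real.hasDerivAt_rpow_const (Or.inr hp)).comp_hasFDerivAt x hx.hasFDerivAt
  rw [gradient, hcomp.fderiv, map_smul, norm_smul, gradient, Real.norm_of_nonneg
    (mul_nonneg (by linarith) (Real.rpow_nonneg (hv0 x) _))]

theorem LipschitzWith.integral_norm_gradient_rpow_rpow (hv : LipschitzWith C v)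
    (hv0 : ∀ x, 0 ≤ v x) {p : ℝ} (hp : 1 ≤ p) (b : ℝ) :
    ∫ x, ‖gradient (fun y => v y ^ p) x‖ ^ b ∂μ =
      p ^ b * ∫ x, v x ^ ((p - 1) * b) * ‖gradient v x‖ ^ b ∂μ := by
  rw [← integral_const_mul]
  refine integral_congr_ae ?_
  filter_upwards [hv.ae_norm_gradient_rpow_eq (μ := μ) hv0 hp] with x hx
  have hp0 : 0 ≤ p := by linarith
  have hvp : 0 ≤ v x ^ (p - 1) := Real.rpow_nonneg (hv0 x) _
  rw [hx, Real.mul_rpow (mul_nonneg hp0 hvp) (norm_nonneg _), Real.mul_rpow hp0 hvp,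
    ← Real.rpow_mul (hv0 x), mul_assoc]

theorem LipschitzWith.memLp_norm_gradient_rpow (hv : LipschitzWith C v)
    (hvc : HasCompactSupport v) {b : ℝ} (hb : 0 < b) (q : ENNReal) :
    MemLp (fun x => ‖gradient v x‖ ^ b) q μ := by
  have hsupp : HasCompactSupport (fun x => ‖gradient v x‖ ^ b) :=
    hvc.gradient.comp_left (g := fun y => ‖y‖ ^ b) (by simp [Real.zero_rpow hb.ne'])
  refine hsupp.memLp_of_bound ?_ ((C : ℝ) ^ b) (Filter.Eventually.of_forall fun x => ?_)
  · exact ((measurable_gradient_s15 v).norm.pow_const b).aestronglyMeasurable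
  · rw [Real.norm_of_nonneg (by positivity)]
    exact Real.rpow_le_rpow (norm_nonneg _) (norm_gradient_le_of_lipschitz hv x) hb.le

theorem LipschitzWith.integral_rpow_mul_norm_gradient_rpow_le (hv : LipschitzWith C v)
    (hv0 : ∀ x, 0 ≤ v x) (hvc : HasCompactSupport v) {a b : ℝ} (ha : 0 < a) (hb0 : 0 < b)
    (hb2 : b < 2) :
    ∫ x, v x ^ a * ‖gradient v x‖ ^ b ∂μ ≤
      (∫ x, v x ^ (a * (2 / (2 - b))) ∂μ) ^ ((2 - b) / 2) *
        (∫ x, ‖gradient v x‖ ^ 2 ∂μ) ^ (b / 2) := by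
  have hpq : (2 / (2 - b)).HolderConjugate (2 / b) := by
    simpa only [inv_div] using Real.HolderConjugate.inv_inv (a := (2 - b) / 2) (b := b / 2)
      (by linarith) (by linarith) (by ring)
  have hf : MemLp (fun x => v x ^ a) (ENNReal.ofReal (2 / (2 - b))) μ :=
    (hv.continuous.rpow_const fun _ => Or.inr ha.le).memLp_of_hasCompactSupport
      (hvc.comp_left (g := fun t : ℝ => t ^ a) (Real.zero_rpow ha.ne'))
  have h := integral_mul_le_Lp_mul_Lq_of_nonneg hpq
    (Filter.Eventually.of_forall fun x => Real.rpow_nonneg (hv0 x) a)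
    (Filter.Eventually.of_forall fun x => Real.rpow_nonneg (norm_nonneg (gradient v x)) b)
    hf (hv.memLp_norm_gradient_rpow hvc hb0 _)
  simp only [← Real.rpow_mul (hv0 _), ← Real.rpow_mul (norm_nonneg _), one_div_div] at h
  simpa only [mul_div_cancel₀ _ hb0.ne', Real.rpow_two] using h

end Lipschitz

section Exponents

variable {N σ b t : ℝ}

theorem interpolation_exponent_mem_Ioo (hN : 2 < N) (hσ1 : 1 < σ) (hσ2 : σ < 2)
    (hb : b = N * σ / (N - 2 + σ)) : 1 < b ∧ b < 2 := by
  have hden : 0 < N - 2 + σ := by linarith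
  subst hb
  constructor
  · rw [lt_div_iff₀ hden]; nlinarith
  · rw [div_lt_iff₀ hden]; nlinarith

theorem interpolation_exponent_holder (hN : 2 < N) (hσ0 : 0 < σ) (hσ2 : σ < 2)
    (hb : b = N * σ / (N - 2 + σ)) (ht : t = 2 * N / (N - 2)) :
    (2 / σ - 1) * b * (2 / (2 - b)) = t := by
  have hden : 0 < N - 2 + σ := by linarith
  have hN2 : N - 2 ≠ 0 := by linarith
  have hσ2' : 2 - σ ≠ 0 := by linarith
  have h2b : 2 - b = (N - 2) * (2 - σ) / (N - 2 + σ) := by rw [hb]; field_simp; ring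
  rw [h2b, hb, ht]
  field_simp

theorem interpolation_exponent_add (hN : 2 < N) (hσ : 0 < σ) (hb : b = N * σ / (N - 2 + σ))
    (ht : t = 2 * N / (N - 2)) : t * (2 - b) / 4 + b / 2 = b / σ := by
  have hden : 0 < N - 2 + σ := by linarith
  have hN2 : N - 2 ≠ 0 := by linarith
  subst hb ht
  field_simp
  ring

end Exponents

theorem rpow_le_mul_rpow_of_rpow_one_div_le {T S A t r : ℝ} (hT : 0 ≤ T) (hS : 0 ≤ S)
    (hA : 0 ≤ A) (ht : 0 < t) (hr : 0 ≤ r) (h : T ^ (1 / t) ≤ S * A ^ (1 / 2 : ℝ)) :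
    T ^ r ≤ S ^ (t * r) * A ^ (t * r / 2) := by
  have h' := Real.rpow_le_rpow (by positivity) h (by positivity : 0 ≤ t * r)
  rwa [← Real.rpow_mul hT, ← mul_assoc, one_div_mul_cancel ht.ne', one_mul,
    Real.mul_rpow hS (by positivity), ← Real.rpow_mul hA, one_div_mul_eq_div] at h'

/-- Interpolation estimate for fractional powers (gradient estimate of
Subsection 2.6), with `b = Nσ/(N−2+σ)`. -/
theorem stmt_15
    (N : ℕ) (σ b S tstar : ℝ)
    (hN : 2 < N) (hσ1 : 1 < σ) (hσ2 : σ < 2) (hS : 0 < S)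
    (hb : b = (N : ℝ) * σ / ((N : ℝ) - 2 + σ))
    (htstar : tstar = 2 * (N : ℝ) / ((N : ℝ) - 2))
    (hSob : ∀ w : EuclideanSpace ℝ (Fin N) → ℝ, (∃ c, LipschitzWith c w) →
        HasCompactSupport w →
        (∫ x, |w x| ^ tstar) ^ (1 / tstar) ≤
          S * (∫ x, ‖gradient w x‖ ^ 2) ^ ((1 : ℝ) / 2))
    (v : EuclideanSpace ℝ (Fin N) → ℝ) (hv : ∃ c, LipschitzWith c v)
    (hv0 : ∀ x, 0 ≤ v x) (hvc : HasCompactSupport v) :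
    ∫ x, ‖gradient (fun y => v y ^ (2 / σ)) x‖ ^ b ≤
      (2 / σ) ^ b * S ^ (tstar * (2 - b) / 2) *
        (∫ x, ‖gradient v x‖ ^ 2) ^ (b / σ) := by
  obtain ⟨C, hv⟩ := hv
  have hN' : (2 : ℝ) < N := by exact_mod_cast hN
  have hσ0 : 0 < σ := by linarith
  obtain ⟨hb1, hb2⟩ := interpolation_exponent_mem_Ioo hN' hσ1 hσ2 hb
  have hp : 1 ≤ 2 / σ := by rw [le_div_iff₀ hσ0]; linarith
  have ht : 0 < tstar := by rw [htstar]; exact div_pos (by linarith) (by linarith)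
  set A := ∫ x, ‖gradient v x‖ ^ 2
  have hA : 0 ≤ A := integral_nonneg fun x => by positivity
  have hT : 0 ≤ ∫ x, v x ^ tstar := integral_nonneg fun x => Real.rpow_nonneg (hv0 x) _
  have hsob : (∫ x, v x ^ tstar) ^ (1 / tstar) ≤ S * A ^ (1 / 2 : ℝ) := by
    simpa only [abs_of_nonneg (hv0 _)] using hSob v ⟨C, hv⟩ hvc
  calc ∫ x, ‖gradient (fun y => v y ^ (2 / σ)) x‖ ^ b
      = (2 / σ) ^ b * ∫ x, v x ^ ((2 / σ - 1) * b) * ‖gradient v x‖ ^ b :=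
        hv.integral_norm_gradient_rpow_rpow hv0 hp b
    _ ≤ (2 / σ) ^ b * ((∫ x, v x ^ tstar) ^ ((2 - b) / 2) * A ^ (b / 2)) := by
        gcongr
        have hpb : 0 < (2 / σ - 1) * b :=
          mul_pos (by rw [sub_pos, lt_div_iff₀ hσ0]; linarith) (by linarith)
        simpa only [interpolation_exponent_holder hN' hσ0 hσ2 hb htstar] using
          hv.integral_rpow_mul_norm_gradient_rpow_le hv0 hvc hpb (by linarith) hb2
    _ ≤ (2 / σ) ^ b *
          (S ^ (tstar * ((2 - b) / 2)) * A ^ (tstar * ((2 - b) / 2) / 2) * A ^ (b / 2)) := by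
        gcongr
        exact rpow_le_mul_rpow_of_rpow_one_div_le hT hS.le hA ht (by linarith) hsob
    _ = (2 / σ) ^ b * S ^ (tstar * (2 - b) / 2) * A ^ (b / σ) := by
        have hexp : tstar * ((2 - b) / 2) / 2 + b / 2 = b / σ := by
          rw [← interpolation_exponent_add hN' hσ0 hb htstar]; ring
        rw [mul_assoc, ← Real.rpow_add' hA (hexp ▸ (div_pos (by linarith) hσ0).ne'), hexp,
          mul_div_assoc']
        ring
end

section
/- Comparison of truncated power primitives (used in the proof of Theorem 5.1): Let τ ≥ 2 and n > 0, and define Φ_n(w) = ∫₀^w |T_n(z)|^{τ−2} dz and ψ_n(w) = ∫₀^w |T_n(z)|^{τ/2−1} dz for w ∈ ℝ, where T_n(z) = max(−n, min(n,z)). Then for every w ∈ ℝ: |ψ_n(w)| ≥ (2/τ)|T_n(w)|^{τ/2−1}|w| and |Φ_n(w)| ≤ (|T_n(w)|^{τ/2−1}|w|)^{2(τ−1)/τ}; consequently |Φ_n(w)| ≤ (τ/2)^{2(τ−1)/τ} |ψ_n(w)|^{2(τ−1)/τ}, with a constant independent of n. -/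
/-!
Since `|T_n z| = min n |z|` is even, both primitives are odd and it suffices to take `w ≥ 0`;
put `m = min n w`. The integrand of `Φ_n` is at most its value at `w`, so `Φ_n w ≤ m ^ (τ-2) w`.
As `min n ·` is concave and vanishes at `0`, `min n z ≥ m z / w` on `[0, w]`; integrating the
`(τ/2-1)`-th power gives `ψ_n w ≥ (2/τ) m ^ (τ/2-1) w`. The remaining comparison of
`m ^ (τ-2) w` with `(m ^ (τ/2-1) w) ^ (2(τ-1)/τ)` only uses `m ≤ w`.
-/

open intervalIntegral

lemma abs_max_neg_min_eq {n : ℝ} (hn : 0 ≤ n) (z : ℝ) :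
    |max (-n) (min n z)| = min n |z| := by
  rcases le_total 0 z with hz | hz
  · rw [max_eq_right (by linarith [le_min hn hz]), abs_of_nonneg (le_min hn hz),
      abs_of_nonneg hz]
  · rw [min_eq_right (hz.trans hn), abs_of_nonpos (max_le (by linarith) hz), abs_of_nonpos hz]
    simpa using neg_sup (-n) z

section

variable {n p : ℝ}

lemma continuous_min_abs_rpow (hp : 0 ≤ p) : Continuous fun z : ℝ => min n |z| ^ p :=
  (continuous_const.min continuous_abs).rpow_const fun _ => Or.inr hp

lemma integral_min_abs_rpow_le (hn : 0 ≤ n) (hp : 0 ≤ p) {w : ℝ} (hw : 0 ≤ w) :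
    ∫ z in 0..w, min n |z| ^ p ≤ min n w ^ p * w := by
  have hbound : ∀ z ∈ Set.Icc 0 w, min n |z| ^ p ≤ min n w ^ p := fun z hz =>
    Real.rpow_le_rpow (le_min hn (abs_nonneg z))
      (min_le_min_left n (by rw [abs_of_nonneg hz.1]; exact hz.2)) hp
  calc ∫ z in 0..w, min n |z| ^ p
      ≤ ∫ _ in 0..w, min n w ^ p :=
        integral_mono_on hw ((continuous_min_abs_rpow hp).intervalIntegrable _ _)
          intervalIntegrable_const hbound
    _ = min n w ^ p * w := by simp [mul_comm]

-- `min n ·` is concave and vanishes at `0`, so it lies above its chord on `[0, w]`.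
lemma min_mul_le_mul_min (hn : 0 ≤ n) {w z : ℝ} (hz : 0 ≤ z) (hzw : z ≤ w) :
    min n w * z ≤ w * min n z := by
  rcases le_total n z with hnz | hzn
  · rw [min_eq_left hnz, min_eq_left (hnz.trans hzw), mul_comm]
    exact mul_le_mul_of_nonneg_right hzw hn
  · rw [min_eq_right hzn]
    exact mul_le_mul_of_nonneg_right (min_le_right n w) hz

lemma le_integral_min_abs_rpow (hn : 0 ≤ n) (hp : 0 ≤ p) {w : ℝ} (hw : 0 ≤ w) :
    min n w ^ p * w / (p + 1) ≤ ∫ z in 0..w, min n |z| ^ p := by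
  rcases hw.eq_or_lt with rfl | hw
  · simp
  have hpow : ∀ z ∈ Set.Icc 0 w, min n w ^ p * z ^ p ≤ w ^ p * min n |z| ^ p := by
    rintro z ⟨hz, hzw⟩
    rw [abs_of_nonneg hz, ← Real.mul_rpow (le_min hn hw.le) hz,
      ← Real.mul_rpow hw.le (le_min hn hz)]
    exact Real.rpow_le_rpow (by positivity) (min_mul_le_mul_min hn hz hzw) hp
  have hint : w ^ p * (min n w ^ p * w / (p + 1)) = ∫ z in 0..w, min n w ^ p * z ^ p := by
    rw [integral_const_mul, integral_rpow (Or.inl (by linarith)),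
      Real.zero_rpow (by linarith), Real.rpow_add hw, Real.rpow_one]
    ring
  have hmono : w ^ p * (min n w ^ p * w / (p + 1)) ≤ w ^ p * ∫ z in 0..w, min n |z| ^ p := by
    rw [hint, ← integral_const_mul]
    exact integral_mono_on hw.le ((by fun_prop : Continuous fun z : ℝ => _).intervalIntegrable _ _)
      (((continuous_min_abs_rpow hp).const_mul _).intervalIntegrable _ _) hpow
  exact le_of_mul_le_mul_left hmono (by positivity)

lemma integral_min_abs_rpow_neg (w : ℝ) :
    ∫ z in 0..-w, min n |z| ^ p = -∫ z in 0..w, min n |z| ^ p := by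
  simpa [integral_symm w 0] using (integral_comp_neg (fun z => min n |z| ^ p) (a := 0) (b := -w))

lemma abs_integral_min_abs_rpow (hn : 0 ≤ n) (w : ℝ) :
    |∫ z in 0..w, min n |z| ^ p| = ∫ z in 0..|w|, min n |z| ^ p := by
  have hnonneg : ∀ {v : ℝ}, 0 ≤ v → 0 ≤ ∫ z in 0..v, min n |z| ^ p := fun hv =>
    integral_nonneg hv fun z _ => Real.rpow_nonneg (le_min hn (abs_nonneg z)) p
  rcases le_total 0 w with hw | hw
  · rw [abs_of_nonneg hw, abs_of_nonneg (hnonneg hw)]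
  · have hneg := integral_min_abs_rpow_neg (n := n) (p := p) w
    rw [abs_of_nonpos hw, hneg, abs_of_nonpos (by linarith [hnonneg (neg_nonneg.2 hw)])]

end

/-- With `α = 2(τ-1)/τ` and `β = (τ-2)/τ`: `τ - 2 = (τ/2-1)α + β` and `α = β + 1`,
so the claim reduces to `a ^ β ≤ v ^ β`. -/
lemma rpow_sub_two_mul_le_rpow {τ a v : ℝ} (hτ : 2 ≤ τ) (ha : 0 ≤ a) (hav : a ≤ v) :
    a ^ (τ - 2) * v ≤ (a ^ (τ / 2 - 1) * v) ^ (2 * (τ - 1) / τ) := by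
  have hv : 0 ≤ v := ha.trans hav
  have hτ0 : 0 < τ := by linarith
  set α := 2 * (τ - 1) / τ with hα
  set β := (τ - 2) / τ with hβ
  have hβ0 : 0 ≤ β := div_nonneg (by linarith) hτ0.le
  have hqα : 0 ≤ (τ / 2 - 1) * α := mul_nonneg (by linarith) (div_nonneg (by linarith) hτ0.le)
  have hexp : τ - 2 = (τ / 2 - 1) * α + β := by rw [hα, hβ]; field_simp; ring
  have hα1 : α = β + 1 := by rw [hα, hβ]; field_simp; ring
  rw [Real.mul_rpow (Real.rpow_nonneg ha _) hv, ← Real.rpow_mul ha, hexp,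
    Real.rpow_add_of_nonneg ha hqα hβ0, hα1, Real.rpow_add_of_nonneg hv hβ0 zero_le_one,
    Real.rpow_one, mul_assoc]
  gcongr

/-- Comparison of truncated power primitives (used in the proof of Theorem 5.1). -/
theorem stmt_16
    (τ n : ℝ) (hτ : 2 ≤ τ) (hn : 0 < n)
    (T Φ ψ : ℝ → ℝ)
    (hT : ∀ z : ℝ, T z = max (-n) (min n z))
    (hΦ : ∀ w : ℝ, Φ w = ∫ z in (0 : ℝ)..w, |T z| ^ (τ - 2))
    (hψ : ∀ w : ℝ, ψ w = ∫ z in (0 : ℝ)..w, |T z| ^ (τ / 2 - 1)) :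
    ∀ w : ℝ,
      (2 / τ) * |T w| ^ (τ / 2 - 1) * |w| ≤ |ψ w| ∧
      |Φ w| ≤ (|T w| ^ (τ / 2 - 1) * |w|) ^ (2 * (τ - 1) / τ) ∧
      |Φ w| ≤ (τ / 2) ^ (2 * (τ - 1) / τ) * |ψ w| ^ (2 * (τ - 1) / τ) := by
  have hT_abs (z : ℝ) : |T z| = min n |z| := by rw [hT, abs_max_neg_min_eq hn.le]
  intro w
  have hΦ_abs : |Φ w| = ∫ z in 0..|w|, min n |z| ^ (τ - 2) := by
    simp only [hΦ, hT_abs]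
    exact abs_integral_min_abs_rpow hn.le w
  have hψ_abs : |ψ w| = ∫ z in 0..|w|, min n |z| ^ (τ / 2 - 1) := by
    simp only [hψ, hT_abs]
    exact abs_integral_min_abs_rpow hn.le w
  have hlower : (2 / τ) * |T w| ^ (τ / 2 - 1) * |w| ≤ |ψ w| := by
    have h := le_integral_min_abs_rpow hn.le (by linarith : (0 : ℝ) ≤ τ / 2 - 1) (abs_nonneg w)
    rw [show τ / 2 - 1 + 1 = τ / 2 by ring] at h
    rw [hψ_abs, hT_abs]
    convert h using 1
    ring
  have hupper : |Φ w| ≤ (|T w| ^ (τ / 2 - 1) * |w|) ^ (2 * (τ - 1) / τ) := by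
    rw [hΦ_abs, hT_abs]
    exact (integral_min_abs_rpow_le hn.le (by linarith) (abs_nonneg w)).trans
      (rpow_sub_two_mul_le_rpow hτ (le_min hn.le (abs_nonneg w)) (min_le_right _ _))
  refine ⟨hlower, hupper, hupper.trans ?_⟩
  have hscaled : |T w| ^ (τ / 2 - 1) * |w| ≤ τ / 2 * |ψ w| := by
    calc |T w| ^ (τ / 2 - 1) * |w| = τ / 2 * (2 / τ * |T w| ^ (τ / 2 - 1) * |w|) := by
          field_simp
      _ ≤ τ / 2 * |ψ w| := by gcongr
  rw [← Real.mul_rpow (by linarith : (0 : ℝ) ≤ τ / 2) (abs_nonneg _)]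
  exact Real.rpow_le_rpow (by positivity) hscaled (div_nonneg (by linarith) (by linarith))
end
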